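/- arXiv:2311.07325 — 4 statements merged into one kernel-verified Lean document; each statement's English description precedes it below -/
import Mathlib

section
/- For all integers p, q, and t, the identity (2(p+q)t² + 4qt + q)³ + (2(p+q)t² + 4qt - p + 2q)³ + (-2(p+q)t² + (p-3q)t + p)³ + (-2(p+q)t² - (p+5q)t + p - 2q)³ = p³ + q³ holds. -/
theorem sum_two_cubes_eq_sum_four_cubes {R : Type*} [CommRing R] (p q t : R) :
    (2*(p+q)*t^2 + 4*q*t + q)^3 + (2*(p+q)*t^2 + 4*q*t - p + 2*q)^3
    + (-2*(p+q)*t^2 + (p-3*q)*t + p)^3 + (-2*(p+q)*t^2 - (p+5*q)*t + p - 2*q)^3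
    = p^3 + q^3 := by
  ring

theorem stmt0 (p q t : ℤ) :
    (2*(p+q)*t^2 + 4*q*t + q)^3 + (2*(p+q)*t^2 + 4*q*t - p + 2*q)^3
    + (-2*(p+q)*t^2 + (p-3*q)*t + p)^3 + (-2*(p+q)*t^2 - (p+5*q)*t + p - 2*q)^3
    = p^3 + q^3 :=
  sum_two_cubes_eq_sum_four_cubes p q t
end

section
/- Every integer expressible as p³ + q³ for some integers p, q can be expressed, for infinitely many 4-tuples of integers (x₁, x₂, x₃, x₄), as x₁³ + x₂³ + x₃³ + x₄³. More precisely: for any integers p, q, the set of 4-tuples (x₁,x₂,x₃,x₄) ∈ ℤ⁴ with x₁³ + x₂³ + x₃³ + x₄³ = p³ + q³ is infinite, provided p + q ≠ 0. -/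
/-!
The quadruples `cubeFamily p q t`, quadratic in `t`, have cubes summing to `p³ + q³` identically
in `t`. Their first and third coordinates add up to `(p+q)(t+1)`, so for `p + q ≠ 0` distinct
parameters `t` give distinct quadruples.
-/

section
variable {R : Type*} [CommRing R]

def sumFourCubes (x : R × R × R × R) : R :=
  x.1 ^ 3 + x.2.1 ^ 3 + x.2.2.1 ^ 3 + x.2.2.2 ^ 3

def cubeFamily (p q t : R) : R × R × R × R :=
  (2 * (p + q) * t ^ 2 + 4 * q * t + q,
   2 * (p + q) * t ^ 2 + 4 * q * t - p + 2 * q,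
   -(2 * (p + q) * t ^ 2) + (p - 3 * q) * t + p,
   -(2 * (p + q) * t ^ 2) - (p + 5 * q) * t + p - 2 * q)

theorem sumFourCubes_cubeFamily (p q t : R) :
    sumFourCubes (cubeFamily p q t) = p ^ 3 + q ^ 3 := by
  simp only [sumFourCubes, cubeFamily]
  ring

theorem cubeFamily_fst_add_third (p q t : R) :
    (cubeFamily p q t).1 + (cubeFamily p q t).2.2.1 = (p + q) * (t + 1) := by
  simp only [cubeFamily]
  ring

theorem cubeFamily_injective [NoZeroDivisors R] {p q : R} (h : p + q ≠ 0) :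
    Function.Injective (cubeFamily p q) := by
  intro s t hst
  have hsum : (p + q) * (s + 1) = (p + q) * (t + 1) := by
    rw [← cubeFamily_fst_add_third, ← cubeFamily_fst_add_third, hst]
  exact add_right_cancel (mul_left_cancel₀ h hsum)

theorem infinite_setOf_sumFourCubes_eq [NoZeroDivisors R] [Infinite R] {p q : R}
    (h : p + q ≠ 0) : {x : R × R × R × R | sumFourCubes x = p ^ 3 + q ^ 3}.Infinite :=
  Set.infinite_of_injective_forall_mem (cubeFamily_injective h) (sumFourCubes_cubeFamily p q)

end

theorem stmt2 (p q : ℤ) (h : p + q ≠ 0) :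
    {x : ℤ × ℤ × ℤ × ℤ |
      x.1^3 + x.2.1^3 + x.2.2.1^3 + x.2.2.2^3 = p^3 + q^3}.Infinite :=
  infinite_setOf_sumFourCubes_eq h
end

section
/- For all integers m and t, the identity (36t³ - 36t² + 12t + m)³ + (36t³ - 36t² + 12t + m - 2)³ + 2(-36t³ + 36t² - 12t - m + 1)³ + (-6t + 2)³ = 6m + 2 holds. -/
theorem add_one_pow_three_add_sub_one_pow_three_add_two_mul_neg_pow_three
    {R : Type*} [CommRing R] (a : R) :
    (a + 1)^3 + (a - 1)^3 + 2*(-a)^3 = 6*a := by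
  ring

/-- With `a = 36t³ - 36t² + 12t + m - 1` the first three cubes sum to `6a`, and
`6(36t³ - 36t² + 12t) = 8 - (-6t + 2)³` absorbs the dependence on `t`. -/
theorem stmt16 (m t : ℤ) :
    (36*t^3 - 36*t^2 + 12*t + m)^3 + (36*t^3 - 36*t^2 + 12*t + m - 2)^3
    + 2*(-36*t^3 + 36*t^2 - 12*t - m + 1)^3 + (-6*t + 2)^3 = 6*m + 2 := by
  linear_combination add_one_pow_three_add_sub_one_pow_three_add_two_mul_neg_pow_three
    (36*t^3 - 36*t^2 + 12*t + m - 1)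
end

section
/- For all integers m and t, the identity (36t³ - 54t² + 27t + m - 3)³ + (36t³ - 54t² + 27t + m - 5)³ + 2(-36t³ + 54t² - 27t - m + 4)³ + (-6t + 3)³ = 6m + 3 holds. -/
theorem stmt17 (m t : ℤ) :
    (36*t^3 - 54*t^2 + 27*t + m - 3)^3 + (36*t^3 - 54*t^2 + 27*t + m - 5)^3
    + 2*(-36*t^3 + 54*t^2 - 27*t - m + 4)^3 + (-6*t + 3)^3 = 6*m + 3 := by
  -- With x = 36t³ - 54t² + 27t + m - 4 the first three terms are (x+1)³ + (x-1)³ - 2x³ = 6x,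
  -- and the cubic part of 6x is cancelled by (3 - 6t)³.
  ring
end
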